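/- Let A ∈ ℝ^(m×n) have full column rank with Moore–Penrose pseudo-inverse G = A⁺, and let a ∈ ℝ^m. Define a⁽²⁾ = a − A G a. If a⁽²⁾ ≠ 0, then the Moore–Penrose pseudo-inverse of the augmented matrix A' = [A a] is G' = [G − d bᵀ ; bᵀ] (stacked as rows), where d = G a and bᵀ = (a⁽²⁾)ᵀ / ((a⁽²⁾)ᵀ a⁽²⁾). -/

import Mathlib

/-!
With `r = a - A G a` and `b = r / (r ⬝ r)`, the Penrose equations for `A` give `Aᵀ r = 0`,
hence `bᵀ A = 0` and, as `rᵀ a = rᵀ r`, `bᵀ a = 1`. Block multiplication then yields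
`A' G' = A G + r bᵀ`, symmetric because `r bᵀ` is a multiple of `r rᵀ`, and
`G' A' = diag (G A, 1)`; the four Penrose equations for `A'` and `G'` follow from these two
products and those for `A` and `G`.
-/

open Matrix
/-- `G` is the Moore–Penrose pseudo-inverse of `A` (the four Penrose conditions). -/
def IsMoorePenrose {m n : ℕ} (A : Matrix (Fin m) (Fin n) ℝ)
    (G : Matrix (Fin n) (Fin m) ℝ) : Prop :=
  A * G * A = A ∧ G * A * G = G ∧ (A * G)ᵀ = A * G ∧ (G * A)ᵀ = G * A

namespace Matrix

variable {ι κ l R : Type*} {n : ℕ}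

def snocCol (A : Matrix ι (Fin n) R) (a : ι → R) : Matrix ι (Fin (n + 1)) R :=
  of fun i => Fin.snoc (A i) (a i)

def snocRow (B : Matrix (Fin n) κ R) (b : κ → R) : Matrix (Fin (n + 1)) κ R :=
  of (Fin.snoc B b)

@[simp]
theorem snocCol_apply_castSucc (A : Matrix ι (Fin n) R) (a : ι → R) (i : ι) (j : Fin n) :
    snocCol A a i j.castSucc = A i j := by
  simp [snocCol]

@[simp]
theorem snocCol_apply_last (A : Matrix ι (Fin n) R) (a : ι → R) (i : ι) :
    snocCol A a i (Fin.last n) = a i := by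
  simp [snocCol]

@[simp]
theorem snocRow_apply_castSucc (B : Matrix (Fin n) κ R) (b : κ → R) (i : Fin n) (j : κ) :
    snocRow B b i.castSucc j = B i j :=
  congrFun (Fin.snoc_castSucc (α := fun _ => κ → R) ..) j

@[simp]
theorem snocRow_apply_last (B : Matrix (Fin n) κ R) (b : κ → R) (j : κ) :
    snocRow B b (Fin.last n) j = b j :=
  congrFun (Fin.snoc_last (α := fun _ => κ → R) ..) j

theorem transpose_snocRow_snocCol {k : ℕ} (M : Matrix (Fin n) (Fin k) R) (u : Fin n → R)
    (v : Fin k → R) (c : R) :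
    (snocRow (snocCol M u) (Fin.snoc v c))ᵀ = snocRow (snocCol Mᵀ v) (Fin.snoc u c) := by
  ext i j
  refine Fin.lastCases ?_ (fun i => ?_) i <;> refine Fin.lastCases ?_ (fun j => ?_) j <;> simp

section NonUnitalNonAssocSemiring

variable [NonUnitalNonAssocSemiring R]

theorem mul_snocCol [Fintype ι] (C : Matrix l ι R) (A : Matrix ι (Fin n) R) (a : ι → R) :
    C * snocCol A a = snocCol (C * A) (C *ᵥ a) := by
  ext i j
  refine Fin.lastCases ?_ (fun j => ?_) j <;> simp [mul_apply, mulVec, dotProduct]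

theorem snocRow_mul [Fintype ι] (B : Matrix (Fin n) ι R) (b : ι → R) (C : Matrix ι l R) :
    snocRow B b * C = snocRow (B * C) (b ᵥ* C) := by
  ext i j
  refine Fin.lastCases ?_ (fun i => ?_) i <;> simp [mul_apply, vecMul, dotProduct]

theorem vecMul_snocCol [Fintype ι] (b : ι → R) (A : Matrix ι (Fin n) R) (a : ι → R) :
    b ᵥ* snocCol A a = Fin.snoc (b ᵥ* A) (b ⬝ᵥ a) := by
  ext j
  refine Fin.lastCases ?_ (fun j => ?_) j <;> simp [vecMul, dotProduct]

theorem snocCol_mul_snocRow (A : Matrix κ (Fin n) R) (a : κ → R) (B : Matrix (Fin n) ι R)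
    (b : ι → R) : snocCol A a * snocRow B b = A * B + vecMulVec a b := by
  ext i j
  simp [mul_apply, Fin.sum_univ_castSucc, vecMulVec_apply]

theorem snocRow_mul_snocCol [Fintype ι] (B : Matrix (Fin n) ι R) (b : ι → R)
    (A : Matrix ι (Fin n) R) (a : ι → R) :
    snocRow B b * snocCol A a =
      snocRow (snocCol (B * A) (B *ᵥ a)) (Fin.snoc (b ᵥ* A) (b ⬝ᵥ a)) := by
  rw [snocRow_mul, mul_snocCol, vecMul_snocCol]

end NonUnitalNonAssocSemiring

theorem snocRow_snocCol_zero_mul_snocRow [NonAssocSemiring R] {k : ℕ}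
    (M : Matrix (Fin n) (Fin k) R) (X : Matrix (Fin k) ι R) (b : ι → R) :
    snocRow (snocCol M 0) (Fin.snoc 0 1) * snocRow X b = snocRow (M * X) b := by
  ext i j
  refine Fin.lastCases ?_ (fun i => ?_) i <;> simp [mul_apply, Fin.sum_univ_castSucc]

theorem add_vecMulVec_mul_snocCol [Semiring R] [Fintype ι] {A : Matrix ι (Fin n) R}
    {a b : ι → R} (C : Matrix l ι R) (r : l → R) (hbA : b ᵥ* A = 0) (hba : b ⬝ᵥ a = 1) :
    (C + vecMulVec r b) * snocCol A a = snocCol (C * A) (C *ᵥ a + r) := by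
  rw [mul_snocCol, Matrix.add_mul, vecMulVec_mul, hbA, add_mulVec, vecMulVec_mulVec, hba]
  congr 1
  · ext
    simp [vecMulVec_apply]
  · simp

theorem snocCol_mul_snocRow_sub_vecMulVec [NonUnitalRing R] (A : Matrix κ (Fin n) R)
    (a : κ → R) (B : Matrix (Fin n) ι R) (d : Fin n → R) (b : ι → R) :
    snocCol A a * snocRow (B - vecMulVec d b) b = A * B + vecMulVec (a - A *ᵥ d) b := by
  rw [snocCol_mul_snocRow, Matrix.mul_sub, mul_vecMulVec, sub_vecMulVec]
  abel

theorem snocRow_sub_vecMulVec_mul_snocCol [Ring R] [Fintype ι] {A : Matrix ι (Fin n) R}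
    {a b : ι → R} (B : Matrix (Fin n) ι R) (hbA : b ᵥ* A = 0) (hba : b ⬝ᵥ a = 1) :
    snocRow (B - vecMulVec (B *ᵥ a) b) b * snocCol A a =
      snocRow (snocCol (B * A) 0) (Fin.snoc 0 1) := by
  rw [snocRow_mul_snocCol, Matrix.sub_mul, vecMulVec_mul, sub_mulVec, vecMulVec_mulVec, hbA, hba]
  simp

end Matrix

namespace IsMoorePenrose

variable {m n : ℕ} {A : Matrix (Fin m) (Fin n) ℝ} {G : Matrix (Fin n) (Fin m) ℝ}

theorem transpose_mul_mul (hG : IsMoorePenrose A G) : Aᵀ * (A * G) = Aᵀ := by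
  rw [← hG.2.2.1, ← transpose_mul, hG.1]

theorem residual_vecMul (hG : IsMoorePenrose A G) (a : Fin m → ℝ) :
    (a - A *ᵥ (G *ᵥ a)) ᵥ* A = 0 := by
  rw [← mulVec_transpose, mulVec_sub, mulVec_mulVec, mulVec_mulVec, Matrix.mul_assoc,
    hG.transpose_mul_mul, sub_self]

theorem residual_dotProduct_eq (hG : IsMoorePenrose A G) (a : Fin m → ℝ) :
    (a - A *ᵥ (G *ᵥ a)) ⬝ᵥ a = (a - A *ᵥ (G *ᵥ a)) ⬝ᵥ (a - A *ᵥ (G *ᵥ a)) := by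
  rw [dotProduct_sub _ a, dotProduct_mulVec, hG.residual_vecMul, zero_dotProduct, sub_zero]

end IsMoorePenrose

theorem stmt10_general {m n : ℕ} (A : Matrix (Fin m) (Fin n) ℝ) (G : Matrix (Fin n) (Fin m) ℝ)
    (hG : IsMoorePenrose A G)
    (a a2 : Fin m → ℝ) (ha2 : a2 = a - A.mulVec (G.mulVec a)) (ha2ne : a2 ≠ 0)
    (d : Fin n → ℝ) (hd : d = G.mulVec a)
    (b : Fin m → ℝ) (hb : b = (a2 ⬝ᵥ a2)⁻¹ • a2) :
    IsMoorePenrose (Matrix.of fun i j => (Fin.snoc (A i) (a i) : Fin (n + 1) → ℝ) j)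
      (Matrix.of (Fin.snoc (fun j : Fin n => (G - Matrix.vecMulVec d b) j) b : Fin (n + 1) → Fin m → ℝ)) := by
  change IsMoorePenrose (snocCol A a) (snocRow (G - vecMulVec d b) b)
  have hnorm : a2 ⬝ᵥ a2 ≠ 0 := by simpa [dotProduct_self_eq_zero] using ha2ne
  have hbA : b ᵥ* A = 0 := by rw [hb, smul_vecMul, ha2, hG.residual_vecMul, smul_zero]
  have hba : b ⬝ᵥ a = 1 := by
    rw [hb, smul_dotProduct, ha2, hG.residual_dotProduct_eq, ← ha2, smul_eq_mul,
      inv_mul_cancel₀ hnorm]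
  have hAG' : snocCol A a * snocRow (G - vecMulVec d b) b = A * G + vecMulVec a2 b := by
    rw [snocCol_mul_snocRow_sub_vecMulVec, hd, ← ha2]
  have hGA' : snocRow (G - vecMulVec d b) b * snocCol A a
      = snocRow (snocCol (G * A) 0) (Fin.snoc 0 1) := by
    rw [hd, snocRow_sub_vecMulVec_mul_snocCol G hbA hba]
  obtain ⟨hAGA, hGAG, hAG, hGA⟩ := hG
  refine ⟨?_, ?_, ?_, ?_⟩
  · rw [hAG', add_vecMulVec_mul_snocCol _ _ hbA hba, hAGA, ← mulVec_mulVec, ha2, add_sub_cancel]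
  · rw [hGA', snocRow_snocCol_zero_mul_snocRow, Matrix.mul_sub, hGAG, mul_vecMulVec, hd,
      mulVec_mulVec, hGAG]
  · rw [hAG', transpose_add, hAG, transpose_vecMulVec, hb, vecMulVec_smul, smul_vecMulVec]
  · rw [hGA', transpose_snocRow_snocCol, hGA]

/-- Greville's column-update formula, case `a⁽²⁾ ≠ 0`: if `A` has full column rank with
pseudo-inverse `G`, then the pseudo-inverse of `A' = [A a]` is obtained by stacking the
rows of `G - d bᵀ` with the row `bᵀ`, where `d = G a` and `b = a⁽²⁾ / (a⁽²⁾ᵀ a⁽²⁾)`. -/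
theorem stmt10 {m n : ℕ} (A : Matrix (Fin m) (Fin n) ℝ) (G : Matrix (Fin n) (Fin m) ℝ)
    (hrank : A.rank = n) (hG : IsMoorePenrose A G)
    (a a2 : Fin m → ℝ) (ha2 : a2 = a - A.mulVec (G.mulVec a)) (ha2ne : a2 ≠ 0)
    (d : Fin n → ℝ) (hd : d = G.mulVec a)
    (b : Fin m → ℝ) (hb : b = (a2 ⬝ᵥ a2)⁻¹ • a2) :
    IsMoorePenrose (Matrix.of fun i j => (Fin.snoc (A i) (a i) : Fin (n + 1) → ℝ) j)
      (Matrix.of (Fin.snoc (fun j : Fin n => (G - Matrix.vecMulVec d b) j) b : Fin (n + 1) → Fin m → ℝ)) :=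
  stmt10_general A G hG a a2 ha2 ha2ne d hd b hb
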